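/- (Cavity streaming equation.) In the random Gibbs setting, fix s ≥ 1, β > 0, θ = tanh β, α′ > 0. For t ≥ 0 let Ω′_t be the random probability measure on {−1,1}^N obtained by reweighting Ω with the Boltzmann factor exp(β Σ_{ν=1}^{P_{2α′t}} J′_ν σ_{k_ν}), where P_{2α′t} is Poisson of mean 2α′t, {k_ν} are i.i.d. uniform on {1,…,N} and {J′_ν} are i.i.d. symmetric signs, all independent of each other and of the background randomness; write ⟨·⟩′_t = E Ω′^{⊗s}_t(·), where E now also averages over the perturbation variables. Then for every function Φ : ({−1,1}^N)^s → ℝ of s replicas, t ↦ ⟨Φ⟩′_t is differentiable and d⟨Φ⟩′_t/dt = −2α′ ⟨Φ⟩′_t + 2α′ E[ Ω′^{⊗s}_t( Φ · Σ_{k=0}^{s} θ^k J^k e_k(σ^{(1)}_{i},…,σ^{(s)}_{i}) ) · Σ_{m=0}^{∞} binom(s+m−1, m) (−Jθω)^m ], where i is uniform on {1,…,N} and J is an independent symmetric sign (both averaged by E), ω = Ω′_t(σ_i), and e_k denotes the k-th elementary symmetric polynomial (so the first bracket is 1 + Jθ Σ_a σ^{(a)}_i + θ² Σ_{a<b} σ^{(a)}_i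 σ^{(b)}_i + Jθ³ Σ_{a<b<c} σ^{(a)}_i σ^{(b)}_i σ^{(c)}_i + ⋯ and the second is 1 − sJθω + (s(s+1)/2!)θ²ω² − (s(s+1)(s+2)/3!)Jθ³ω³ + ⋯, the latter series converging absolutely since |θω| ≤ θ < 1). -/

import Mathlib

open MeasureTheory

noncomputable section

/-- The real value of a Boolean spin: `true ↦ 1`, `false ↦ -1`. -/
def spin (b : Bool) : ℝ := if b then 1 else -1

/-- Expectation over the cavity randomness: a Poisson (mean `lam`) number `q` of cavity
terms, with i.i.d. uniform indices `k : Fin q → Fin N` and signs `J' : Fin q → Bool`. -/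
def cavityAvg (N : ℕ) (lam : ℝ)
    (g : (q : ℕ) → (Fin q → Fin N) → (Fin q → Bool) → ℝ) : ℝ :=
  ∑' q : ℕ, (Real.exp (-lam) * lam ^ q / (Nat.factorial q : ℝ)) *
    ((∑ k : Fin q → Fin N, ∑ J' : Fin q → Bool, g q k J') / ((N : ℝ) ^ q * 2 ^ q))

/-- The perturbed (cavity-reweighted) weight of a configuration:
`w(σ) · exp (β ∑_{ν<q} J'_ν σ_{k_ν})`. -/
def pertWeight (N : ℕ) (w : (Fin N → Bool) → ℝ) (β : ℝ) (q : ℕ)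
    (k : Fin q → Fin N) (J' : Fin q → Bool) (σ : Fin N → Bool) : ℝ :=
  w σ * Real.exp (β * ∑ ν : Fin q, spin (J' ν) * spin (σ (k ν)))

/-- The `s`-replica expectation `Ω'^{⊗s}(Ψ)` of the perturbed Gibbs measure. -/
def pertReplicaExp (N : ℕ) (w : (Fin N → Bool) → ℝ) (β : ℝ) (q : ℕ)
    (k : Fin q → Fin N) (J' : Fin q → Bool) (s : ℕ)
    (Ψ : (Fin s → (Fin N → Bool)) → ℝ) : ℝ :=
  (∑ σs : Fin s → (Fin N → Bool),
      (∏ a : Fin s, pertWeight N w β q k J' (σs a)) * Ψ σs) /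
    (∑ σ : Fin N → Bool, pertWeight N w β q k J' σ) ^ s

/-- The perturbed Gibbs magnetization `ω = Ω'(σ_i)`. -/
def pertMag (N : ℕ) (w : (Fin N → Bool) → ℝ) (β : ℝ) (q : ℕ)
    (k : Fin q → Fin N) (J' : Fin q → Bool) (i : Fin N) : ℝ :=
  (∑ σ : Fin N → Bool, pertWeight N w β q k J' σ * spin (σ i)) /
    ∑ σ : Fin N → Bool, pertWeight N w β q k J' σ

/-- The `m`-th elementary symmetric polynomial of the spins `σ^{(1)}_i, …, σ^{(s)}_i`. -/
def esymSpin (N s : ℕ) (σs : Fin s → (Fin N → Bool)) (i : Fin N) (m : ℕ) : ℝ :=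
  ∑ T ∈ (Finset.univ : Finset (Fin s)).powersetCard m, ∏ a ∈ T, spin (σs a i)

/-- The perturbed quenched `s`-replica average
`⟨Φ⟩'_t = E [cavity average of Ω'^{⊗s}_t(Φ)]`, where the Poisson mean of the cavity
perturbation is `2 α' t` and `E = ∫ ∂μ` also averages over the perturbation variables. -/
def pertBracket {Λ : Type*} [MeasurableSpace Λ] (μ : Measure Λ) (N : ℕ)
    (w : Λ → (Fin N → Bool) → ℝ) (β α' : ℝ) (s : ℕ)
    (Φ : (Fin s → (Fin N → Bool)) → ℝ) (t : ℝ) : ℝ :=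
  ∫ l, cavityAvg N (2 * α' * t) (fun q k J' => pertReplicaExp N (w l) β q k J' s Φ) ∂μ

set_option maxHeartbeats 2000000

namespace CavityAux

/-! ### Elementary facts -/

lemma abs_spin (b : Bool) : |spin b| = 1 := by cases b <;> simp [spin]

lemma tanh_lt_one' (β : ℝ) : Real.tanh β < 1 := by
  rw [Real.tanh_eq_sinh_div_cosh, div_lt_one (Real.cosh_pos β)]
  nlinarith [Real.exp_pos (-β), Real.cosh_sub_sinh β]

lemma tanh_nonneg' {β : ℝ} (hβ : 0 ≤ β) : 0 ≤ Real.tanh β := by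
  rw [Real.tanh_eq_sinh_div_cosh]
  exact div_nonneg (Real.sinh_nonneg_iff.mpr hβ) (Real.cosh_pos β).le

variable {N : ℕ} {w : (Fin N → Bool) → ℝ} {β : ℝ}

lemma pertWeight_nonneg (hnn : ∀ σ, 0 ≤ w σ) (q : ℕ) (k : Fin q → Fin N)
    (J' : Fin q → Bool) (σ : Fin N → Bool) : 0 ≤ pertWeight N w β q k J' σ :=
  mul_nonneg (hnn σ) (Real.exp_pos _).le

lemma Z_pos (hnn : ∀ σ, 0 ≤ w σ) (hw1 : ∑ σ, w σ = 1) (q : ℕ) (k : Fin q → Fin N)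
    (J' : Fin q → Bool) : 0 < ∑ σ, pertWeight N w β q k J' σ := by
  obtain ⟨σ₀, -, h⟩ : ∃ σ ∈ Finset.univ, (0:ℝ) < w σ := by
    apply Finset.exists_lt_of_sum_lt (f := fun _ => (0:ℝ)); simp [hw1]
  exact Finset.sum_pos' (fun σ _ => pertWeight_nonneg hnn q k J' σ)
    ⟨σ₀, Finset.mem_univ _, mul_pos h (Real.exp_pos _)⟩

lemma abs_pertMag_le (hnn : ∀ σ, 0 ≤ w σ) (hw1 : ∑ σ, w σ = 1) (q : ℕ)
    (k : Fin q → Fin N) (J' : Fin q → Bool) (i : Fin N) :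
    |pertMag N w β q k J' i| ≤ 1 := by
  have hZ := Z_pos hnn hw1 q k J' (β := β)
  rw [pertMag, abs_div, abs_of_pos hZ, div_le_one hZ]
  calc |∑ σ, pertWeight N w β q k J' σ * spin (σ i)|
      ≤ ∑ σ, |pertWeight N w β q k J' σ * spin (σ i)| := Finset.abs_sum_le_sum_abs _ _
    _ = ∑ σ, pertWeight N w β q k J' σ := by
        refine Finset.sum_congr rfl fun σ _ => ?_
        rw [abs_mul, abs_spin, mul_one, abs_of_nonneg (pertWeight_nonneg hnn q k J' σ)]

lemma abs_pertReplicaExp_le (hnn : ∀ σ, 0 ≤ w σ) (hw1 : ∑ σ, w σ = 1) (q : ℕ)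
    (k : Fin q → Fin N) (J' : Fin q → Bool) (s : ℕ) (Ψ : (Fin s → (Fin N → Bool)) → ℝ) :
    |pertReplicaExp N w β q k J' s Ψ| ≤ ∑ σs : Fin s → (Fin N → Bool), |Ψ σs| := by
  have hZ := Z_pos hnn hw1 q k J' (β := β)
  set Z := ∑ σ, pertWeight N w β q k J' σ with hZdef
  rw [pertReplicaExp, abs_div, abs_pow, abs_of_pos hZ, div_le_iff₀ (pow_pos hZ s)]
  calc |∑ σs : Fin s → (Fin N → Bool), (∏ a, pertWeight N w β q k J' (σs a)) * Ψ σs|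
      ≤ ∑ σs : Fin s → (Fin N → Bool), |(∏ a, pertWeight N w β q k J' (σs a)) * Ψ σs| :=
        Finset.abs_sum_le_sum_abs _ _
    _ ≤ ∑ σs : Fin s → (Fin N → Bool), |Ψ σs| * Z ^ s := by
        refine Finset.sum_le_sum fun σs _ => ?_
        rw [abs_mul, mul_comm]
        refine mul_le_mul_of_nonneg_left ?_ (abs_nonneg _)
        rw [abs_of_nonneg (Finset.prod_nonneg fun a _ => pertWeight_nonneg hnn q k J' _)]
        calc ∏ a, pertWeight N w β q k J' (σs a) ≤ ∏ _a : Fin s, Z :=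
              Finset.prod_le_prod (fun a _ => pertWeight_nonneg hnn q k J' _)
                (fun a _ => Finset.single_le_sum
                  (fun σ _ => pertWeight_nonneg hnn q k J' σ) (Finset.mem_univ _))
          _ = Z ^ s := by simp
    _ = (∑ σs : Fin s → (Fin N → Bool), |Ψ σs|) * Z ^ s := by rw [← Finset.sum_mul]

/-! ### One cavity step -/

lemma exp_spin (β : ℝ) (J b : Bool) :
    Real.exp (β * (spin J * spin b)) =
      Real.cosh β * (1 + spin J * Real.tanh β * spin b) := by
  have h1 : Real.cosh β * Real.tanh β = Real.sinh β := by
    rw [Real.tanh_eq_sinh_div_cosh, mul_div_cancel₀ _ (Real.cosh_pos β).ne']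
  cases J <;> cases b <;>
    simp only [spin, if_true, if_false, Bool.false_eq_true] <;> norm_num <;>
    nlinarith [Real.cosh_add_sinh β, Real.cosh_sub_sinh β]

lemma pertWeight_cons (w : (Fin N → Bool) → ℝ) (β : ℝ) (q : ℕ) (k : Fin q → Fin N)
    (J' : Fin q → Bool) (i : Fin N) (J : Bool) (σ : Fin N → Bool) :
    pertWeight N w β (q+1) (Fin.cons i k) (Fin.cons J J') σ =
      pertWeight N w β q k J' σ *
        (Real.cosh β * (1 + spin J * Real.tanh β * spin (σ i))) := by
  unfold pertWeight
  rw [Fin.sum_univ_succ]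
  simp only [Fin.cons_zero, Fin.cons_succ]
  rw [mul_add, Real.exp_add, exp_spin]
  ring

lemma abs_x_lt_one (hnn : ∀ σ, 0 ≤ w σ) (hw1 : ∑ σ, w σ = 1) (hβ : 0 ≤ β) (q : ℕ)
    (k : Fin q → Fin N) (J' : Fin q → Bool) (i : Fin N) (J : Bool) :
    |spin J * Real.tanh β * pertMag N w β q k J' i| < 1 := by
  rw [abs_mul, abs_mul, abs_spin, one_mul, abs_of_nonneg (tanh_nonneg' hβ)]
  calc Real.tanh β * |pertMag N w β q k J' i| ≤ Real.tanh β * 1 :=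
        mul_le_mul_of_nonneg_left (abs_pertMag_le hnn hw1 q k J' i) (tanh_nonneg' hβ)
    _ < 1 := by rw [mul_one]; exact tanh_lt_one' β

lemma one_add_pos (hnn : ∀ σ, 0 ≤ w σ) (hw1 : ∑ σ, w σ = 1) (hβ : 0 ≤ β) (q : ℕ)
    (k : Fin q → Fin N) (J' : Fin q → Bool) (i : Fin N) (J : Bool) :
    0 < 1 + spin J * Real.tanh β * pertMag N w β q k J' i := by
  have h := abs_x_lt_one hnn hw1 hβ q k J' i J
  nlinarith [neg_abs_le (spin J * Real.tanh β * pertMag N w β q k J' i)]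

lemma replica_cons (hnn : ∀ σ, 0 ≤ w σ) (hw1 : ∑ σ, w σ = 1) (hβ : 0 ≤ β) (q : ℕ)
    (k : Fin q → Fin N) (J' : Fin q → Bool) (s : ℕ) (i : Fin N) (J : Bool)
    (Φ : (Fin s → (Fin N → Bool)) → ℝ) :
    pertReplicaExp N w β (q+1) (Fin.cons i k) (Fin.cons J J') s Φ =
      pertReplicaExp N w β q k J' s
          (fun σs => Φ σs * ∏ a : Fin s, (1 + spin J * Real.tanh β * spin (σs a i))) /
        (1 + spin J * Real.tanh β * pertMag N w β q k J' i) ^ s := by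
  have hZ := Z_pos hnn hw1 q k J' (β := β)
  have hc := Real.cosh_pos β
  set Z := ∑ σ, pertWeight N w β q k J' σ with hZdef
  set ω := pertMag N w β q k J' i with hωdef
  have hnum : ∀ σs : Fin s → (Fin N → Bool),
      (∏ a : Fin s, pertWeight N w β (q+1) (Fin.cons i k) (Fin.cons J J') (σs a)) =
      Real.cosh β ^ s * ((∏ a : Fin s, pertWeight N w β q k J' (σs a)) *
        ∏ a : Fin s, (1 + spin J * Real.tanh β * spin (σs a i))) := by
    intro σs
    simp_rw [pertWeight_cons w β q k J' i J]
    rw [Finset.prod_mul_distrib, Finset.prod_mul_distrib, Finset.prod_const]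
    simp [Finset.card_univ]; ring
  have hM : ω * Z = ∑ σ, pertWeight N w β q k J' σ * spin (σ i) := by
    rw [hωdef, pertMag, ← hZdef, div_mul_cancel₀ _ hZ.ne']
  have hden : (∑ σ, pertWeight N w β (q+1) (Fin.cons i k) (Fin.cons J J') σ) =
      Real.cosh β * Z * (1 + spin J * Real.tanh β * ω) := by
    have hterm : ∀ σ : Fin N → Bool,
        pertWeight N w β q k J' σ * (Real.cosh β * (1 + spin J * Real.tanh β * spin (σ i))) =
        Real.cosh β * pertWeight N w β q k J' σ +
          Real.cosh β * (spin J * Real.tanh β) * (pertWeight N w β q k J' σ * spin (σ i)) :=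
      fun σ => by ring
    simp_rw [pertWeight_cons w β q k J' i J, hterm, Finset.sum_add_distrib, ← Finset.mul_sum]
    rw [← hZdef, ← hM]
    ring
  rw [pertReplicaExp, pertReplicaExp, hden, ← hZdef]
  have hS : (∑ σs : Fin s → Fin N → Bool,
      (∏ a, pertWeight N w β (q+1) (Fin.cons i k) (Fin.cons J J') (σs a)) * Φ σs)
      = Real.cosh β ^ s * ∑ σs : Fin s → Fin N → Bool,
          (∏ a, pertWeight N w β q k J' (σs a)) *
            (Φ σs * ∏ a, (1 + spin J * Real.tanh β * spin (σs a i))) := by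
    rw [Finset.mul_sum]
    refine Finset.sum_congr rfl fun σs _ => ?_
    rw [hnum σs]; ring
  rw [hS, div_div, mul_pow, mul_pow, mul_assoc]
  exact mul_div_mul_left _ _ (by positivity)

/-! ### Expansion of the product and the binomial series -/

lemma prod_expand (s : ℕ) (x : ℝ) (N' : ℕ)
    (σs : Fin s → (Fin N' → Bool)) (i : Fin N') :
    ∏ a : Fin s, (1 + x * spin (σs a i)) =
      ∑ m ∈ Finset.range (s+1), x ^ m * esymSpin N' s σs i m := by
  classical
  have h := Finset.prod_add (fun a : Fin s => x * spin (σs a i)) (fun _ => (1:ℝ))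
    Finset.univ
  simp only [Finset.prod_const_one, mul_one] at h
  have h2 : ∀ a : Fin s, 1 + x * spin (σs a i) = x * spin (σs a i) + 1 := fun a => by ring
  calc ∏ a : Fin s, (1 + x * spin (σs a i))
      = ∑ T ∈ (Finset.univ : Finset (Fin s)).powerset, ∏ a ∈ T, (x * spin (σs a i)) := by
        simp_rw [h2]; exact h
    _ = ∑ T ∈ (Finset.univ : Finset (Fin s)).powerset,
          x ^ T.card * ∏ a ∈ T, spin (σs a i) := by
        refine Finset.sum_congr rfl fun T _ => ?_
        rw [Finset.prod_mul_distrib, Finset.prod_const]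
    _ = ∑ m ∈ Finset.range (s+1), x ^ m * esymSpin N' s σs i m := by
        rw [Finset.sum_powerset]
        simp only [Finset.card_univ, Fintype.card_fin]
        refine Finset.sum_congr rfl fun m _ => ?_
        rw [esymSpin, Finset.mul_sum]
        refine Finset.sum_congr rfl fun T hT => ?_
        rw [(Finset.mem_powersetCard.mp hT).2]

lemma binom_series (s : ℕ) (hs : 1 ≤ s) {x : ℝ} (hx : |x| < 1) :
    HasSum (fun m : ℕ => ((s + m - 1).choose m : ℝ) * (-x) ^ m) (1 / (1 + x) ^ s) := by
  have h := hasSum_choose_mul_geometric_of_norm_lt_one (𝕜 := ℝ) (s - 1) (r := -x)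
    (by rwa [norm_neg, Real.norm_eq_abs])
  have h1 : (1 : ℝ) - -x = 1 + x := by ring
  have h2 : s - 1 + 1 = s := Nat.succ_pred_eq_of_pos hs
  rw [h1, h2] at h
  convert h using 2 with m
  congr 2
  have : s + m - 1 = m + (s - 1) := by omega
  rw [this, Nat.choose_symm_add]

/-- The key identity: the inner bracketed expression of the streaming equation equals the
`(q+1)`-term replica expectation obtained by adding one cavity term at site `i` with sign `J`. -/
lemma inner_eq (hnn : ∀ σ, 0 ≤ w σ) (hw1 : ∑ σ, w σ = 1) (hβ : 0 ≤ β) {s : ℕ}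
    (hs : 1 ≤ s) (q : ℕ) (k : Fin q → Fin N) (J' : Fin q → Bool) (i : Fin N) (J : Bool)
    (Φ : (Fin s → (Fin N → Bool)) → ℝ) :
    pertReplicaExp N w β q k J' s
        (fun σs => Φ σs * ∑ m ∈ Finset.range (s + 1),
          Real.tanh β ^ m * spin J ^ m * esymSpin N s σs i m) *
      ∑' m : ℕ, (Nat.choose (s + m - 1) m : ℝ) *
        (-(spin J) * Real.tanh β * pertMag N w β q k J' i) ^ m
    = pertReplicaExp N w β (q+1) (Fin.cons i k) (Fin.cons J J') s Φ := by
  set ω := pertMag N w β q k J' i with hωdef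
  have habs : |spin J * Real.tanh β * ω| < 1 := abs_x_lt_one hnn hw1 hβ q k J' i J
  have htsum : (∑' m : ℕ, (Nat.choose (s + m - 1) m : ℝ) *
      (-(spin J) * Real.tanh β * ω) ^ m) = 1 / (1 + spin J * Real.tanh β * ω) ^ s := by
    rw [← (binom_series s hs habs).tsum_eq]
    refine tsum_congr fun m => ?_
    congr 1
    ring
  have hΨ : (fun σs : Fin s → (Fin N → Bool) => Φ σs * ∑ m ∈ Finset.range (s + 1),
        Real.tanh β ^ m * spin J ^ m * esymSpin N s σs i m) =
      (fun σs : Fin s → (Fin N → Bool) =>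
        Φ σs * ∏ a : Fin s, (1 + spin J * Real.tanh β * spin (σs a i))) := by
    funext σs
    rw [prod_expand s (spin J * Real.tanh β) N σs i]
    congr 1
    refine Finset.sum_congr rfl fun m _ => ?_
    rw [mul_pow, mul_comm (spin J ^ m) (Real.tanh β ^ m)]
  rw [htsum, hΨ, mul_one_div, replica_cons hnn hw1 hβ q k J' s i J Φ]

/-! ### Reindexing of the averages -/

lemma sum_pi_succ {X : Type*} [Fintype X] [DecidableEq X] (q : ℕ) (g : (Fin (q+1) → X) → ℝ) :
    ∑ f : Fin (q+1) → X, g f = ∑ x : X, ∑ f : Fin q → X, g (Fin.cons x f) := by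
  rw [← (Fin.consEquiv (fun _ : Fin (q+1) => X)).sum_comp g]
  rw [Fintype.sum_prod_type]
  rfl

lemma quad_comm {A B C D : Type*} [Fintype A] [Fintype B] [Fintype C] [Fintype D]
    (g : A → B → C → D → ℝ) :
    ∑ a : A, ∑ b : B, ∑ c : C, ∑ d : D, g a b c d =
      ∑ b : B, ∑ d : D, ∑ a : A, ∑ c : C, g a b c d := by
  rw [Finset.sum_comm]
  refine Finset.sum_congr rfl fun b _ => ?_
  calc ∑ a : A, ∑ c : C, ∑ d : D, g a b c d
      = ∑ a : A, ∑ d : D, ∑ c : C, g a b c d :=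
        Finset.sum_congr rfl fun a _ => Finset.sum_comm
    _ = ∑ d : D, ∑ a : A, ∑ c : C, g a b c d := Finset.sum_comm

lemma avg_cons (N : ℕ) (hN : 1 ≤ N) (q : ℕ)
    (f : (Fin (q+1) → Fin N) → (Fin (q+1) → Bool) → ℝ) :
    (∑ k' : Fin (q+1) → Fin N, ∑ J'' : Fin (q+1) → Bool, f k' J'') /
        ((N : ℝ) ^ (q+1) * 2 ^ (q+1)) =
      (∑ k : Fin q → Fin N, ∑ J' : Fin q → Bool,
          (1 / (N : ℝ)) * ∑ i : Fin N, (1 / 2) * ∑ J : Bool, f (Fin.cons i k) (Fin.cons J J')) /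
        ((N : ℝ) ^ q * 2 ^ q) := by
  have hN' : (0:ℝ) < N := by exact_mod_cast hN
  rw [sum_pi_succ q (fun k' => ∑ J'' : Fin (q+1) → Bool, f k' J'')]
  simp_rw [sum_pi_succ q (fun J'' => f _ J'')]
  rw [quad_comm (fun i k J J' => f (Fin.cons i k) (Fin.cons J J'))]
  simp_rw [← Finset.mul_sum]
  rw [div_eq_div_iff (by positivity) (by positivity), pow_succ, pow_succ]
  field_simp

/-! ### Differentiation of the Poisson average -/

lemma summable_q_pow_fact (r : ℝ) :
    Summable (fun q : ℕ => (q : ℝ) * r ^ (q - 1) / q.factorial) := by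
  rw [← summable_nat_add_iff 1]
  have : (fun q : ℕ => ((q+1 : ℕ) : ℝ) * r ^ (q + 1 - 1) / (q+1).factorial) =
      fun q : ℕ => r ^ q / q.factorial := by
    funext q
    rw [Nat.add_sub_cancel, Nat.factorial_succ]
    push_cast
    rw [mul_div_mul_left _ _ (by positivity : ((q:ℝ)+1) ≠ 0)]
  rw [this]
  exact Real.summable_pow_div_factorial r

lemma summable_coeff_mul {b : ℕ → ℝ} {C : ℝ} (hb : ∀ q, |b q| ≤ C) (x e : ℝ) (he : 0 ≤ e) :
    Summable (fun q : ℕ => e * x ^ q / q.factorial * b q) := by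
  apply Summable.of_norm_bounded (g := fun q => e * (|x| ^ q / q.factorial) * C)
  · exact ((Real.summable_pow_div_factorial |x|).mul_left e).mul_right C
  · intro q
    rw [Real.norm_eq_abs, abs_mul, abs_div, abs_mul, abs_pow]
    apply mul_le_mul ?_ (hb q) (abs_nonneg _) (by positivity)
    rw [abs_of_nonneg he, Nat.abs_cast, mul_div_assoc]

lemma poisson_deriv (lam : ℝ) (hlam : 0 < lam) (b : ℕ → ℝ) (C : ℝ)
    (hb : ∀ q, |b q| ≤ C) (t : ℝ) :
    HasDerivAt (fun y : ℝ => ∑' q : ℕ, Real.exp (-(lam * y)) * (lam * y) ^ q / q.factorial * b q)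
      (-lam * (∑' q : ℕ, Real.exp (-(lam * t)) * (lam * t) ^ q / q.factorial * b q) +
        lam * ∑' q : ℕ, Real.exp (-(lam * t)) * (lam * t) ^ q / q.factorial * b (q+1)) t := by
  have hC : 0 ≤ C := le_trans (abs_nonneg _) (hb 0)
  set R : ℝ := |t| + 1 with hR
  have hRpos : (0:ℝ) < R := by positivity
  set g : ℕ → ℝ → ℝ := fun q y =>
    Real.exp (-(lam * y)) * (lam * y) ^ q / q.factorial * b q with hg
  set g' : ℕ → ℝ → ℝ := fun q y =>
    (Real.exp (-(lam * y)) * -lam * (lam * y) ^ q +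
      Real.exp (-(lam * y)) * ((q : ℝ) * (lam * y) ^ (q - 1) * lam)) / q.factorial * b q with hg'
  have hderiv : ∀ q : ℕ, ∀ y : ℝ, HasDerivAt (g q) (g' q y) y := by
    intro q y
    have h0 : HasDerivAt (fun y : ℝ => lam * y) lam y := by
      simpa using (hasDerivAt_id y).const_mul lam
    have h1 : HasDerivAt (fun y : ℝ => Real.exp (-(lam * y)))
        (Real.exp (-(lam * y)) * -lam) y := h0.neg.exp
    have h2 : HasDerivAt (fun y : ℝ => (lam * y) ^ q)
        ((q : ℝ) * (lam * y) ^ (q - 1) * lam) y := h0.pow q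
    exact ((h1.mul h2).div_const _).mul_const _
  set u : ℕ → ℝ := fun q => (Real.exp (lam * R) * lam * (lam * R) ^ q +
      Real.exp (lam * R) * lam * ((q : ℝ) * (lam * R) ^ (q - 1))) / q.factorial * C with hu
  have husum : Summable u := by
    apply Summable.mul_right
    simp_rw [add_div]
    apply Summable.add
    · simpa [mul_div_assoc] using
        ((Real.summable_pow_div_factorial (lam * R)).mul_left (Real.exp (lam * R) * lam))
    · simpa [mul_div_assoc] using
        ((summable_q_pow_fact (lam * R)).mul_left (Real.exp (lam * R) * lam))
  have hbound : ∀ q : ℕ, ∀ y ∈ Set.Ioo (-R) R, ‖g' q y‖ ≤ u q := by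
    intro q y hy
    have hexp : Real.exp (-(lam * y)) ≤ Real.exp (lam * R) := by
      apply Real.exp_le_exp.mpr
      nlinarith [neg_abs_le y, abs_nonneg y, le_abs_self y, abs_le.mpr ⟨hy.1.le, hy.2.le⟩,
        (abs_le.mp (abs_le.mpr ⟨hy.1.le, hy.2.le⟩)).1]
    have hpow : ∀ n : ℕ, |(lam * y) ^ n| ≤ (lam * R) ^ n := by
      intro n
      rw [abs_pow]
      apply pow_le_pow_left₀ (abs_nonneg _)
      rw [abs_mul, abs_of_pos hlam]
      have : |y| ≤ R := abs_le.mpr ⟨hy.1.le, hy.2.le⟩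
      nlinarith
    rw [hg', hu, Real.norm_eq_abs, abs_mul, abs_div, Nat.abs_cast]
    apply mul_le_mul _ (hb q) (abs_nonneg _) (by positivity)
    gcongr
    refine (abs_add_le _ _).trans (add_le_add ?_ ?_)
    · rw [abs_mul, abs_mul, abs_neg, abs_of_pos hlam, abs_of_pos (Real.exp_pos _)]
      exact mul_le_mul (mul_le_mul hexp le_rfl hlam.le (Real.exp_pos _).le) (hpow q)
        (abs_nonneg _) (by positivity)
    · rw [abs_mul, abs_of_pos (Real.exp_pos _), abs_mul, abs_mul, Nat.abs_cast, abs_of_pos hlam]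
      calc Real.exp (-(lam * y)) * ((q:ℝ) * |(lam * y) ^ (q-1)| * lam)
          ≤ Real.exp (lam * R) * ((q:ℝ) * (lam * R) ^ (q-1) * lam) := by
            apply mul_le_mul hexp ?_ (by positivity) (Real.exp_pos _).le
            exact mul_le_mul (mul_le_mul le_rfl (hpow (q-1)) (abs_nonneg _) (by positivity))
              le_rfl hlam.le (by positivity)
        _ = Real.exp (lam * R) * lam * ((q:ℝ) * (lam * R) ^ (q-1)) := by ring
  have hmem : t ∈ Set.Ioo (-R) R := by
    constructor
    · nlinarith [neg_abs_le t]
    · nlinarith [le_abs_self t]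
  have hsum0 : Summable fun q => g q t :=
    summable_coeff_mul hb (lam * t) (Real.exp (-(lam * t))) (Real.exp_pos _).le
  have hder := hasDerivAt_tsum_of_isPreconnected husum isOpen_Ioo
    (convex_Ioo (-R) R).isPreconnected (fun q y _ => hderiv q y) hbound hmem hsum0 hmem
  convert hder using 1
  case e'_4 => rfl
  case e'_5 => rfl
  set d : ℕ → ℝ := fun q =>
    Real.exp (-(lam * t)) * ((q:ℝ) * (lam * t) ^ (q - 1)) / q.factorial * b q with hd
  have hdsum : Summable d := by
    apply Summable.of_norm_bounded
      (g := fun q : ℕ => Real.exp (-(lam * t)) *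
        ((q : ℝ) * |lam * t| ^ (q - 1) / (q.factorial : ℝ)) * C)
    · exact ((summable_q_pow_fact |lam * t|).mul_left (Real.exp (-(lam * t)))).mul_right C
    · intro q
      rw [hd, Real.norm_eq_abs, abs_mul]
      apply mul_le_mul _ (hb q) (abs_nonneg _) (by positivity)
      rw [abs_div, abs_mul, abs_mul, abs_pow, Nat.abs_cast, Nat.abs_cast,
        abs_of_pos (Real.exp_pos _)]
      exact le_of_eq (by ring)
  have hsplit : ∀ q, g' q t = -lam * g q t + lam * d q := by
    intro q; rw [hg', hg, hd]; ring
  have h1 : ∑' q, g' q t = -lam * (∑' q, g q t) + lam * ∑' q, d q := by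
    rw [funext hsplit]
    rw [Summable.tsum_add (hsum0.mul_left _) (hdsum.mul_left _), tsum_mul_left, tsum_mul_left]
  have hd0 : d 0 = 0 := by simp [hd]
  have h2 : ∑' q, d q = ∑' q : ℕ,
      Real.exp (-(lam * t)) * (lam * t) ^ q / q.factorial * b (q + 1) := by
    rw [Summable.tsum_eq_zero_add hdsum, hd0, zero_add]
    refine tsum_congr fun q => ?_
    simp only [hd, Nat.add_sub_cancel, Nat.factorial_succ]
    push_cast
    have hq : ((q:ℝ)+1) ≠ 0 := by positivity
    have hf : (q.factorial : ℝ) ≠ 0 := by positivity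
    field_simp
  rw [h1, h2]

/-! ### Swapping the integral and the Poisson sum -/

lemma integral_cavity_swap {Λ : Type*} [MeasurableSpace Λ] (μ : Measure Λ)
    [IsProbabilityMeasure μ] (A : ℕ → Λ → ℝ) (hA : ∀ q, Measurable (A q))
    (M : ℝ) (hM0 : 0 ≤ M) (hM : ∀ q l, |A q l| ≤ M) (lam : ℝ) :
    ∫ l, ∑' q : ℕ, Real.exp (-lam) * lam ^ q / q.factorial * A q l ∂μ =
      ∑' q : ℕ, Real.exp (-lam) * lam ^ q / q.factorial * ∫ l, A q l ∂μ := by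
  set c : ℕ → ℝ := fun q => Real.exp (-lam) * lam ^ q / q.factorial with hc
  have hcs : Summable fun q => |c q| * M := by
    have he : (fun q => |c q| * M) =
        fun q => Real.exp (-lam) * (|lam| ^ q / q.factorial) * M := by
      funext q
      rw [hc, abs_div, abs_mul, abs_pow, Real.abs_exp, Nat.abs_cast, mul_div_assoc]
    rw [he]
    exact ((Real.summable_pow_div_factorial _).mul_left _).mul_right _
  rw [integral_tsum (fun q => ((hA q).const_mul (c q)).aestronglyMeasurable) ?_]
  · exact tsum_congr fun q => integral_const_mul _ _
  · have h1 : ∀ q : ℕ, ∫⁻ l, ‖c q * A q l‖₊ ∂μ ≤ ENNReal.ofReal (|c q| * M) := by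
      intro q
      calc ∫⁻ l, ‖c q * A q l‖₊ ∂μ
          ≤ ∫⁻ _, ENNReal.ofReal (|c q| * M) ∂μ := by
            refine lintegral_mono fun l => ?_
            rw [← enorm_eq_nnnorm, ← ofReal_norm, Real.norm_eq_abs, abs_mul]
            exact ENNReal.ofReal_le_ofReal
              (mul_le_mul_of_nonneg_left (hM q l) (abs_nonneg _))
        _ = ENNReal.ofReal (|c q| * M) := by rw [lintegral_const, measure_univ, mul_one]
    refine ne_top_of_le_ne_top ?_ (ENNReal.tsum_le_tsum h1)
    rw [← ENNReal.ofReal_tsum_of_nonneg (fun q => by positivity) hcs]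
    exact ENNReal.ofReal_ne_top

lemma measurable_replica {Λ : Type*} [MeasurableSpace Λ] {N : ℕ}
    (w : Λ → (Fin N → Bool) → ℝ) (hmeas : ∀ σ, Measurable fun l => w l σ) (β : ℝ)
    (q : ℕ) (k : Fin q → Fin N) (J' : Fin q → Bool) (s : ℕ)
    (Ψ : (Fin s → (Fin N → Bool)) → ℝ) :
    Measurable fun l => pertReplicaExp N (w l) β q k J' s Ψ := by
  unfold pertReplicaExp pertWeight
  apply Measurable.div
  · exact Finset.measurable_sum _ fun σs _ =>
      (Finset.measurable_prod _ fun a _ => (hmeas (σs a)).mul_const _).mul_const _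
  · exact (Finset.measurable_sum _ fun σ _ => (hmeas σ).mul_const _).pow_const s

end CavityAux

/-- Cavity streaming equation: in the random Gibbs setting, with `s ≥ 1`,
`β > 0`, `θ = tanh β`, `α' > 0`, for every function `Φ` of `s` replicas the map
`t ↦ ⟨Φ⟩'_t` is differentiable for `t ≥ 0` and
`d⟨Φ⟩'_t/dt = -2α' ⟨Φ⟩'_t + 2α' E[ Ω'^{⊗s}_t(Φ · ∑_{m=0}^{s} θ^m J^m e_m(σ^{(1)}_i,…,σ^{(s)}_i))
  · ∑_{m=0}^∞ C(s+m-1, m) (-Jθω)^m ]`,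
where `i` is uniform on `{1,…,N}`, `J` is an independent symmetric sign (both averaged by
`E`), `ω = Ω'_t(σ_i)`, and `e_m` is the `m`-th elementary symmetric polynomial. -/
theorem cavity_streaming_equation {Λ : Type*} [MeasurableSpace Λ] (μ : Measure Λ)
    [IsProbabilityMeasure μ] (N : ℕ) (hN : 1 ≤ N) (w : Λ → (Fin N → Bool) → ℝ)
    (hmeas : ∀ σ : Fin N → Bool, Measurable fun l : Λ => w l σ)
    (hnonneg : ∀ l : Λ, ∀ σ : Fin N → Bool, 0 ≤ w l σ)
    (hsum : ∀ l : Λ, ∑ σ : Fin N → Bool, w l σ = 1)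
    (s : ℕ) (hs : 1 ≤ s) (β α' : ℝ) (hβ : 0 < β) (hα' : 0 < α')
    (Φ : (Fin s → (Fin N → Bool)) → ℝ) :
    ∀ t : ℝ, 0 ≤ t →
      HasDerivAt (pertBracket μ N w β α' s Φ)
        (-(2 * α') * pertBracket μ N w β α' s Φ t +
          2 * α' * ∫ l, cavityAvg N (2 * α' * t) (fun q k J' =>
            (1 / (N : ℝ)) * ∑ i : Fin N, (1 / 2) * ∑ J : Bool,
              pertReplicaExp N (w l) β q k J' s
                (fun σs => Φ σs * ∑ m ∈ Finset.range (s + 1),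
                  Real.tanh β ^ m * spin J ^ m * esymSpin N s σs i m) *
              ∑' m : ℕ, (Nat.choose (s + m - 1) m : ℝ) *
                (-(spin J) * Real.tanh β * pertMag N (w l) β q k J' i) ^ m) ∂μ) t := by
  classical
  intro t ht
  open CavityAux in
  -- the averaged `q`-term replica expectation and its quenched average
  set A : ℕ → Λ → ℝ := fun q l =>
    (∑ k : Fin q → Fin N, ∑ J' : Fin q → Bool, pertReplicaExp N (w l) β q k J' s Φ) /
      ((N : ℝ) ^ q * 2 ^ q) with hA
  set M : ℝ := ∑ σs : Fin s → (Fin N → Bool), |Φ σs| with hMdef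
  have hM0 : 0 ≤ M := Finset.sum_nonneg fun σs _ => abs_nonneg _
  have hAmeas : ∀ q, Measurable (A q) := by
    intro q
    exact (Finset.measurable_sum _ fun k _ => Finset.measurable_sum _ fun J' _ =>
      CavityAux.measurable_replica w hmeas β q k J' s Φ).div_const _
  have hAbd : ∀ q l, |A q l| ≤ M := by
    intro q l
    have hNpos : (0:ℝ) < (N : ℝ) ^ q * 2 ^ q := by
      have : (0:ℝ) < (N:ℝ) := by exact_mod_cast hN
      positivity
    rw [hA, abs_div, abs_of_pos hNpos, div_le_iff₀ hNpos]
    calc |∑ k : Fin q → Fin N, ∑ J' : Fin q → Bool, pertReplicaExp N (w l) β q k J' s Φ|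
        ≤ ∑ k : Fin q → Fin N, ∑ J' : Fin q → Bool,
            |pertReplicaExp N (w l) β q k J' s Φ| := by
          refine (Finset.abs_sum_le_sum_abs _ _).trans (Finset.sum_le_sum fun k _ => ?_)
          exact Finset.abs_sum_le_sum_abs _ _
      _ ≤ ∑ _k : Fin q → Fin N, ∑ _J' : Fin q → Bool, M := by
          refine Finset.sum_le_sum fun k _ => Finset.sum_le_sum fun J' _ => ?_
          exact CavityAux.abs_pertReplicaExp_le (hnonneg l) (hsum l) q k J' s Φ
      _ = M * ((N:ℝ) ^ q * 2 ^ q) := by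
          rw [Finset.sum_const, Finset.sum_const, Finset.card_univ, Finset.card_univ,
            Fintype.card_fun, Fintype.card_fun, Fintype.card_fin, Fintype.card_fin,
            Fintype.card_bool, nsmul_eq_mul, nsmul_eq_mul]
          push_cast
          ring
  set b : ℕ → ℝ := fun q => ∫ l, A q l ∂μ with hb
  have hbbd : ∀ q, |b q| ≤ M := by
    intro q
    have := norm_integral_le_of_norm_le_const (μ := μ) (f := A q) (C := M)
      (Filter.Eventually.of_forall fun l => by rw [Real.norm_eq_abs]; exact hAbd q l)
    simpa [measure_univ] using this
  -- `pertBracket` as an explicit Poisson series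
  have hbr : ∀ y : ℝ, pertBracket μ N w β α' s Φ y =
      ∑' q : ℕ, Real.exp (-(2 * α' * y)) * (2 * α' * y) ^ q / q.factorial * b q := by
    intro y
    rw [pertBracket]
    exact CavityAux.integral_cavity_swap μ A hAmeas M hM0 hAbd (2 * α' * y)
  -- the right-hand side integral as an explicit Poisson series
  have hrhs : (∫ l, cavityAvg N (2 * α' * t) (fun q k J' =>
      (1 / (N : ℝ)) * ∑ i : Fin N, (1 / 2) * ∑ J : Bool,
        pertReplicaExp N (w l) β q k J' s
          (fun σs => Φ σs * ∑ m ∈ Finset.range (s + 1),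
            Real.tanh β ^ m * spin J ^ m * esymSpin N s σs i m) *
        ∑' m : ℕ, (Nat.choose (s + m - 1) m : ℝ) *
          (-(spin J) * Real.tanh β * pertMag N (w l) β q k J' i) ^ m) ∂μ) =
      ∑' q : ℕ, Real.exp (-(2 * α' * t)) * (2 * α' * t) ^ q / q.factorial * b (q+1) := by
    have hptw : ∀ l q,
        ((∑ k : Fin q → Fin N, ∑ J' : Fin q → Bool,
          (1 / (N : ℝ)) * ∑ i : Fin N, (1 / 2) * ∑ J : Bool,
            pertReplicaExp N (w l) β q k J' s
              (fun σs => Φ σs * ∑ m ∈ Finset.range (s + 1),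
                Real.tanh β ^ m * spin J ^ m * esymSpin N s σs i m) *
            ∑' m : ℕ, (Nat.choose (s + m - 1) m : ℝ) *
              (-(spin J) * Real.tanh β * pertMag N (w l) β q k J' i) ^ m) /
          ((N : ℝ) ^ q * 2 ^ q)) = A (q+1) l := by
      intro l q
      simp only [hA]
      rw [CavityAux.avg_cons N hN q
        (fun k' J'' => pertReplicaExp N (w l) β (q+1) k' J'' s Φ)]
      congr 1
      refine Finset.sum_congr rfl fun k _ => Finset.sum_congr rfl fun J' _ => ?_
      congr 1
      refine Finset.sum_congr rfl fun i _ => ?_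
      congr 1
      refine Finset.sum_congr rfl fun J _ => ?_
      exact CavityAux.inner_eq (hnonneg l) (hsum l) hβ.le hs q k J' i J Φ
    have hcav : ∀ l, cavityAvg N (2 * α' * t) (fun q k J' =>
        (1 / (N : ℝ)) * ∑ i : Fin N, (1 / 2) * ∑ J : Bool,
          pertReplicaExp N (w l) β q k J' s
            (fun σs => Φ σs * ∑ m ∈ Finset.range (s + 1),
              Real.tanh β ^ m * spin J ^ m * esymSpin N s σs i m) *
          ∑' m : ℕ, (Nat.choose (s + m - 1) m : ℝ) *
            (-(spin J) * Real.tanh β * pertMag N (w l) β q k J' i) ^ m) =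
        ∑' q : ℕ, Real.exp (-(2 * α' * t)) * (2 * α' * t) ^ q / q.factorial * A (q+1) l := by
      intro l
      rw [cavityAvg]
      exact tsum_congr fun q => by rw [hptw l q]
    simp_rw [hcav]
    rw [CavityAux.integral_cavity_swap μ (fun q => A (q+1)) (fun q => hAmeas (q+1)) M hM0
      (fun q l => hAbd (q+1) l) (2 * α' * t)]
  -- conclude by differentiating the Poisson series
  have hd := CavityAux.poisson_deriv (2 * α') (by linarith) b M hbbd t
  have hfun : pertBracket μ N w β α' s Φ =
      fun y : ℝ => ∑' q : ℕ, Real.exp (-(2 * α' * y)) * (2 * α' * y) ^ q / q.factorial * b q :=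
    funext hbr
  rw [hbr t, hrhs, hfun]
  exact hd

end
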